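/- arXiv:1411.5425 — 3 statements merged into one kernel-verified Lean document; each statement's English description precedes it below -/
import Mathlib

section
/- Let G be the ℝ-algebra of germs at 0 of smooth even functions ℝ → ℝ, and let D : G → ℝ be the derivation D([g]) = g''(0). Every derivation F : G → ℝ (over evaluation at 0) satisfies F = (F([j])/2)·D, where j(x) = x². In particular the space of such derivations is 1-dimensional. -/
open Set Filter

theorem hasDerivAt_param_integral_aux {u : ℝ → ℝ} (hu : ContDiff ℝ (⊤ : ℕ∞) u) (k : ℕ) (x₀ : ℝ) :
    HasDerivAt (fun x => ∫ t in (0:ℝ)..1, t ^ k * u (t * x))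
      (∫ t in (0:ℝ)..1, t ^ (k + 1) * deriv u (t * x₀)) x₀ := by
  have hud : Differentiable ℝ u := hu.differentiable (by simp)
  have hdc : Continuous (deriv u) := hu.continuous_deriv (by simp)
  set R : ℝ := |x₀| + 1
  obtain ⟨C, hC⟩ := (isCompact_Icc (a := -R) (b := R)).exists_bound_of_continuousOn
    hdc.continuousOn
  refine (intervalIntegral.hasDerivAt_integral_of_dominated_loc_of_deriv_le
    (F' := fun x t => t ^ (k + 1) * deriv u (t * x)) (bound := fun _ => C)
    (Metric.ball_mem_nhds x₀ one_pos) ?_ ?_ ?_ ?_ ?_ ?_).2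
  · exact Eventually.of_forall fun x =>
      ((continuous_pow k).mul (hu.continuous.comp (continuous_id.mul continuous_const))).aestronglyMeasurable
  · exact ((continuous_pow k).mul
      (hu.continuous.comp (continuous_id.mul continuous_const))).intervalIntegrable _ _
  · exact ((continuous_pow (k + 1)).mul
      (hdc.comp (continuous_id.mul continuous_const))).aestronglyMeasurable
  · refine Eventually.of_forall fun t ht x hx => ?_
    rw [uIoc_of_le zero_le_one] at ht
    have ht0 : 0 ≤ t := ht.1.le
    have ht1 : t ≤ 1 := ht.2
    have hx' : |x| ≤ R := by
      have := Metric.mem_ball.mp hx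
      rw [Real.dist_eq] at this
      have := abs_sub_abs_le_abs_sub x x₀
      simp only [R]; linarith
    have htx : t * x ∈ Icc (-R) R := by
      rw [mem_Icc, ← abs_le, abs_mul, abs_of_nonneg ht0]
      nlinarith [abs_nonneg x]
    have h1 := hC (t * x) htx
    rw [norm_mul, norm_pow, Real.norm_eq_abs, abs_of_nonneg ht0]
    have : t ^ (k + 1) ≤ 1 := pow_le_one₀ ht0 ht1
    have h2 : 0 ≤ ‖deriv u (t * x)‖ := norm_nonneg _
    nlinarith [pow_nonneg ht0 (k + 1)]
  · exact intervalIntegrable_const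
  · refine Eventually.of_forall fun t _ x _ => ?_
    have h1 : HasDerivAt (fun x => t * x) (t * 1) x := (hasDerivAt_id x).const_mul t
    have h2 := (((hud (t * x)).hasDerivAt).comp x h1).const_mul (t ^ k)
    exact h2.congr_deriv (by ring)

theorem contDiff_param_integral_aux (n : ℕ) : ∀ (u : ℝ → ℝ), ContDiff ℝ (⊤ : ℕ∞) u → ∀ k : ℕ,
    ContDiff ℝ n (fun x => ∫ t in (0:ℝ)..1, t ^ k * u (t * x)) := by
  induction n with
  | zero =>
    intro u hu k
    exact contDiff_zero.mpr (continuous_iff_continuousAt.mpr fun x =>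
      (hasDerivAt_param_integral_aux hu k x).continuousAt)
  | succ n ih =>
    intro u hu k
    have hd : deriv (fun x => ∫ t in (0:ℝ)..1, t ^ k * u (t * x)) =
        fun x => ∫ t in (0:ℝ)..1, t ^ (k + 1) * deriv u (t * x) :=
      funext fun x => (hasDerivAt_param_integral_aux hu k x).deriv
    have hu' : ContDiff ℝ (⊤ : ℕ∞) (deriv u) := (contDiff_infty_iff_deriv.mp hu).2
    rw [Nat.cast_succ, contDiff_succ_iff_deriv, hd]
    exact ⟨fun x => (hasDerivAt_param_integral_aux hu k x).differentiableAt,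
      by simp, ih _ hu' _⟩

theorem contDiff_dslope_zero {f : ℝ → ℝ} (hf : ContDiff ℝ (⊤ : ℕ∞) f) :
    ContDiff ℝ (⊤ : ℕ∞) (dslope f 0) := by
  have hfd : Differentiable ℝ f := hf.differentiable (by simp)
  have hdc : Continuous (deriv f) := hf.continuous_deriv (by simp)
  have heq : dslope f 0 = fun x => ∫ t in (0:ℝ)..1, t ^ 0 * deriv f (t * x) := by
    funext x
    rcases eq_or_ne x 0 with rfl | hx
    · simp [dslope_same]
    · rw [dslope_of_ne _ hx, slope_def_field]
      have := intervalIntegral.integral_eq_sub_of_hasDerivAt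
        (f := fun t => x⁻¹ * f (t * x)) (f' := fun t => t ^ 0 * deriv f (t * x)) (a := 0) (b := 1)
        (fun t _ => by
          have h1 : HasDerivAt (fun t => t * x) (1 * x) t := (hasDerivAt_id t).mul_const x
          have h2 := (((hfd (t * x)).hasDerivAt).comp t h1).const_mul x⁻¹
          exact h2.congr_deriv (by field_simp))
        ((continuous_const.mul (hdc.comp (continuous_id.mul continuous_const))).intervalIntegrable _ _)
      rw [this]
      simp only [one_mul, zero_mul, sub_zero]
      field_simp
  rw [heq]
  exact contDiff_infty.mpr fun n => contDiff_param_integral_aux n _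
    ((contDiff_infty_iff_deriv.mp hf).2) 0

/-- even analytic `g` can be written `g 0 + x ^ 2 * h x` for an even analytic `h`. -/
theorem even_hadamard {g : ℝ → ℝ} (hg : ContDiff ℝ (⊤ : ℕ∞) g) (he : ∀ x, g (-x) = g x) :
    ∃ h : ℝ → ℝ, ContDiff ℝ (⊤ : ℕ∞) h ∧ (∀ x, h (-x) = h x) ∧ ∀ x, g x = g 0 + x ^ 2 * h x := by
  -- derivative at 0 vanishes
  have hgd : Differentiable ℝ g := hg.differentiable (by simp)
  have hd0 : deriv g 0 = 0 := by
    have h1 : HasDerivAt (fun x : ℝ => g (-x)) (deriv g (-0) * -1) 0 :=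
      ((hgd (-0)).hasDerivAt).comp (0 : ℝ) (by simpa using hasDerivAt_neg (0:ℝ))
    have h2 : (fun x : ℝ => g (-x)) = g := funext he
    rw [h2, neg_zero] at h1
    have := h1.deriv
    linarith
  set k := dslope g 0 with hk
  set h := dslope k 0 with hh
  have hkC : ContDiff ℝ (⊤ : ℕ∞) k := contDiff_dslope_zero hg
  have hhC : ContDiff ℝ (⊤ : ℕ∞) h := contDiff_dslope_zero hkC
  -- k 0 = deriv g 0 = 0
  have hk0 : k 0 = 0 := by rw [hk, dslope_same]; exact hd0
  have hxk : ∀ x : ℝ, x * k x = g x - g 0 := by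
    intro x; simpa using sub_smul_dslope g 0 x
  have hxh : ∀ x : ℝ, x * h x = k x := by
    intro x
    have := sub_smul_dslope k 0 x
    simpa [hk0] using this
  have key : ∀ x : ℝ, g x = g 0 + x ^ 2 * h x := by
    intro x
    have : x * (x * h x) = g x - g 0 := by rw [hxh]; exact hxk x
    nlinarith [this]
  refine ⟨h, hhC, ?_, key⟩
  intro x
  rcases eq_or_ne x 0 with rfl | hx
  · rw [neg_zero]
  · have e1 := key x
    have e2 := key (-x)
    rw [he x] at e2
    have : x ^ 2 * h (-x) = x ^ 2 * h x := by nlinarith [e1, e2]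
    have hx2 : (x:ℝ) ^ 2 ≠ 0 := pow_ne_zero _ hx
    exact mul_left_cancel₀ hx2 this

/-- second derivative at 0 of `g 0 + x^2 * h x` is `2 * h 0`. -/
theorem second_deriv_eq {g h : ℝ → ℝ} (hh : ContDiff ℝ (⊤ : ℕ∞) h)
    (key : ∀ x, g x = g 0 + x ^ 2 * h x) : deriv (deriv g) 0 = 2 * h 0 := by
  have hhd : Differentiable ℝ h := hh.differentiable (by simp)
  have h8 : ContDiff ℝ ((⊤ : ℕ∞) : WithTop ℕ∞) h := hh.of_le (by simp)
  have hhd' : Differentiable ℝ (deriv h) :=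
    (contDiff_infty_iff_deriv.mp h8).2.differentiable (by norm_num)
  have dg : deriv g = fun x => 2 * x ^ 1 * h x + x ^ 2 * deriv h x := by
    funext x
    have h1 : HasDerivAt g ((2:ℕ) * x ^ 1 * h x + x ^ 2 * deriv h x) x := by
      have h2 : HasDerivAt (fun y : ℝ => g 0 + y ^ 2 * h y)
          ((2:ℕ) * x ^ 1 * h x + x ^ 2 * deriv h x) x :=
        (((hasDerivAt_pow 2 x).mul ((hhd x).hasDerivAt))).const_add (g 0)
      exact h2.congr_of_eventuallyEq (Eventually.of_forall fun y => key y)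
    simpa using h1.deriv
  rw [dg]
  have h1 : HasDerivAt (fun x : ℝ => 2 * x ^ 1 * h x)
      ((2:ℝ) * h 0 + (2 * 0 ^ 1) * deriv h 0) 0 := by
    have := ((hasDerivAt_pow 1 (0:ℝ)).const_mul 2).mul ((hhd 0).hasDerivAt)
    simpa [Pi.mul_def] using this
  have h2 : HasDerivAt (fun x : ℝ => x ^ 2 * deriv h x)
      ((2:ℕ) * (0:ℝ) ^ 1 * deriv h 0 + 0 ^ 2 * deriv (deriv h) 0) 0 :=
    (hasDerivAt_pow 2 (0:ℝ)).mul ((hhd' 0).hasDerivAt)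
  have h3 := h1.add h2
  have := h3.deriv
  simp only [Pi.add_def] at this
  rw [this]
  ring



/-- Every derivation `F` (over evaluation at `0`) on the algebra of germs at `0`
of smooth even functions `ℝ → ℝ` satisfies `F = (F([j])/2) · D`, where
`j(x) = x²` and `D([g]) = g''(0)`.  In particular the space of such derivations
is 1-dimensional, spanned by `D`. -/
theorem derivation_on_even_germs_eq_second_deriv
    (F : (ℝ → ℝ) → ℝ)
    -- F descends to germs at 0
    (hgerm : ∀ f g : ℝ → ℝ, ContDiff ℝ (⊤ : ℕ∞) f → ContDiff ℝ (⊤ : ℕ∞) g →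
      (∀ x, f (-x) = f x) → (∀ x, g (-x) = g x) →
      f =ᶠ[nhds (0 : ℝ)] g → F f = F g)
    -- F is additive
    (hadd : ∀ f g : ℝ → ℝ, ContDiff ℝ (⊤ : ℕ∞) f → ContDiff ℝ (⊤ : ℕ∞) g →
      (∀ x, f (-x) = f x) → (∀ x, g (-x) = g x) → F (f + g) = F f + F g)
    -- F is homogeneous
    (hsmul : ∀ (c : ℝ) (f : ℝ → ℝ), ContDiff ℝ (⊤ : ℕ∞) f → (∀ x, f (-x) = f x) →
      F (c • f) = c * F f)
    -- F satisfies the Leibniz rule over evaluation at 0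
    (hleib : ∀ f g : ℝ → ℝ, ContDiff ℝ (⊤ : ℕ∞) f → ContDiff ℝ (⊤ : ℕ∞) g →
      (∀ x, f (-x) = f x) → (∀ x, g (-x) = g x) →
      F (f * g) = F f * g 0 + f 0 * F g) :
    ∀ g : ℝ → ℝ, ContDiff ℝ (⊤ : ℕ∞) g → (∀ x, g (-x) = g x) →
      F g = (F (fun x => x ^ 2) / 2) * deriv (deriv g) 0 := by
  intro g hg he
  obtain ⟨h, hhC, hhe, key⟩ := even_hadamard hg he
  -- basic functions
  set one : ℝ → ℝ := fun _ => 1 with hone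
  have honeC : ContDiff ℝ (⊤ : ℕ∞) one := contDiff_const
  have honee : ∀ x, one (-x) = one x := fun _ => rfl
  set j : ℝ → ℝ := fun x => x ^ 2 with hj
  have hjC : ContDiff ℝ (⊤ : ℕ∞) j := contDiff_id.pow 2
  have hje : ∀ x, j (-x) = j x := fun x => by simp [hj, neg_pow]
  -- F 1 = 0
  have hone_mul : one * one = one := funext fun x => by simp [hone]
  have hF1 : F one = 0 := by
    have := hleib one one honeC honeC honee honee
    rw [hone_mul] at this
    simp only [hone] at this
    linarith
  -- F const = 0
  have hFconst : ∀ c : ℝ, F (fun _ => c) = 0 := by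
    intro c
    have hc : (fun _ : ℝ => c) = c • one := funext fun x => by simp [hone]
    rw [hc, hsmul c one honeC honee, hF1, mul_zero]
  -- decompose g
  have hge : g = (fun _ => g 0) + (j * h) := funext fun x => by
    simpa [hj, Pi.add_apply, Pi.mul_apply] using key x
  have hjhC : ContDiff ℝ (⊤ : ℕ∞) (j * h) := hjC.mul hhC
  have hjhe : ∀ x, (j * h) (-x) = (j * h) x := fun x => by
    simp [Pi.mul_apply, hje x, hhe x]
  have hFg : F g = F (fun _ => g 0) + F (j * h) := by
    conv_lhs => rw [hge]
    exact hadd _ _ contDiff_const hjhC (fun _ => rfl) hjhe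
  have hFjh : F (j * h) = F j * h 0 := by
    have := hleib j h hjC hhC hje hhe
    rw [this]
    simp [hj]
  rw [hFg, hFconst, hFjh, second_deriv_eq hhC key, zero_add]
  ring
end

section
/- The map from O(n)-invariant smooth functions on ℝⁿ to even smooth functions on ℝ, given by f ↦ (t ↦ f(t,0,…,0)), is a bijection. -/
open scoped ContDiff ENNReal NNReal

section Aux

/-- Smoothness of a parametric integral over `[0,1]`. -/
lemma aux_param_integral : ∀ (k : ℕ) (F : ℝ → ℝ → ℝ), ContDiff ℝ ∞ (Function.uncurry F) →
    ContDiff ℝ k (fun t => ∫ u in (0:ℝ)..1, F t u) := by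
  intro k
  induction k with
  | zero =>
    intro F hF
    exact contDiff_zero.mpr
      (intervalIntegral.continuous_parametric_intervalIntegral_of_continuous' hF.continuous 0 1)
  | succ k ih =>
    intro F hF
    set F' : ℝ → ℝ → ℝ := fun t u => fderiv ℝ (Function.uncurry F) (t, u) (1, 0) with hF'
    have hF'c : ContDiff ℝ ∞ (Function.uncurry F') := by
      have h1 : ContDiff ℝ ∞ (fderiv ℝ (Function.uncurry F)) := hF.fderiv_right (by simp)
      exact h1.clm_apply contDiff_const
    have hderiv : ∀ t u, HasDerivAt (fun t => F t u) (F' t u) t := by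
      intro t u
      have h := ((hF.differentiable (by simp)) (t, u)).hasFDerivAt
      have h2 : HasDerivAt (fun t : ℝ => ((t, u) : ℝ × ℝ)) ((1, 0) : ℝ × ℝ) t :=
        (hasDerivAt_id t).prodMk (hasDerivAt_const t u)
      exact h.comp_hasDerivAt t h2
    have hD : ∀ t, HasDerivAt (fun t => ∫ u in (0:ℝ)..1, F t u)
        (∫ u in (0:ℝ)..1, F' t u) t := by
      intro t
      obtain ⟨C, hC⟩ := ((isCompact_closedBall t 1).prod (isCompact_Icc (a := (0:ℝ)) (b := 1))
        ).exists_bound_of_continuousOn hF'c.continuous.continuousOn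
      refine (intervalIntegral.hasDerivAt_integral_of_dominated_loc_of_deriv_le
        (bound := fun _ => C) (Metric.closedBall_mem_nhds t one_pos) ?_ ?_ ?_ ?_ ?_ ?_).2
      · exact Filter.Eventually.of_forall fun x =>
          (hF.continuous.comp (continuous_const.prodMk continuous_id :
            Continuous fun u : ℝ => (x, u))).aestronglyMeasurable
      · exact (hF.continuous.comp (continuous_const.prodMk continuous_id :
            Continuous fun u : ℝ => (t, u))).intervalIntegrable _ _
      · exact (hF'c.continuous.comp (continuous_const.prodMk continuous_id :
            Continuous fun u : ℝ => (t, u))).aestronglyMeasurable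
      · refine Filter.Eventually.of_forall fun u hu x hx => hC (x, u) ⟨hx, ?_⟩
        rw [Set.uIoc_of_le zero_le_one] at hu
        exact ⟨hu.1.le, hu.2⟩
      · exact intervalIntegrable_const
      · exact Filter.Eventually.of_forall fun u _ x _ => hderiv x u
    have hdf : deriv (fun t => ∫ u in (0:ℝ)..1, F t u) = fun t => ∫ u in (0:ℝ)..1, F' t u :=
      funext fun t => (hD t).deriv
    rw [Nat.cast_succ, contDiff_succ_iff_deriv]
    refine ⟨fun t => (hD t).differentiableAt, fun h => absurd h (by simp), ?_⟩
    rw [hdf]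
    exact ih F' hF'c

/-- `g' (t) = t * g₂ t` with `g₂` smooth, when `g' 0 = 0`. -/
lemma aux_div (g : ℝ → ℝ) (hg : ContDiff ℝ ∞ g) (h0 : deriv g 0 = 0) :
    ∃ g₂ : ℝ → ℝ, ContDiff ℝ ∞ g₂ ∧ ∀ t, deriv g t = t * g₂ t := by
  have hg1 : ContDiff ℝ ∞ (deriv g) := (contDiff_infty_iff_deriv.mp hg).2
  have hg2 : ContDiff ℝ ∞ (deriv (deriv g)) := (contDiff_infty_iff_deriv.mp hg1).2
  refine ⟨fun t => ∫ u in (0:ℝ)..1, deriv (deriv g) (u * t), ?_, ?_⟩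
  · rw [contDiff_infty]
    intro k
    exact aux_param_integral k (fun t u => deriv (deriv g) (u * t))
      (hg2.comp (contDiff_snd.mul contDiff_fst))
  · intro t
    have hd : ∀ u ∈ Set.uIcc (0:ℝ) 1, HasDerivAt (fun u => deriv g (u * t))
        (t * deriv (deriv g) (u * t)) u := by
      intro u _
      have := ((hg1.differentiable (by simp)) (u * t)).hasDerivAt.comp u
        (hasDerivAt_mul_const t)
      exact this.congr_deriv (mul_comm _ _)
    have := intervalIntegral.integral_eq_sub_of_hasDerivAt hd
      ((continuous_const.mul (hg2.continuous.comp (continuous_id.mul continuous_const))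
        ).intervalIntegrable _ _)
    rw [intervalIntegral.integral_const_mul] at this
    rw [one_mul, zero_mul, h0, sub_zero] at this
    exact this.symm

/-- `x ↦ g ‖x‖` is `C^k` for every `k`, for `g` smooth and even. -/
lemma aux_norm_k (N : ℕ) : ∀ k : ℕ, ∀ g : ℝ → ℝ, ContDiff ℝ ∞ g → (∀ t, g (-t) = g t) →
    ContDiff ℝ k (fun x : EuclideanSpace ℝ (Fin N) => g ‖x‖) := by
  intro k
  induction k with
  | zero =>
    intro g hg _
    exact contDiff_zero.mpr (hg.continuous.comp continuous_norm)
  | succ k ih =>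
    intro g hg he
    have hodd : ∀ t, deriv g (-t) = - deriv g t := by
      intro t
      have h1 := deriv_comp_neg (f := g) (x := t)
      have hgg : (fun t : ℝ => g (-t)) = g := funext he
      rw [hgg] at h1
      linarith
    have h0 : deriv g 0 = 0 := by
      have := hodd 0
      simp at this
      linarith
    obtain ⟨g₂, hg₂, hg₂e⟩ := aux_div g hg h0
    have he₂ : ∀ t, g₂ (-t) = g₂ t := by
      intro t
      rcases eq_or_ne t 0 with rfl | ht
      · simp
      · have h1 := hg₂e (-t)
        rw [hodd, hg₂e] at h1
        have : t * g₂ (-t) = t * g₂ t := by linear_combination h1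
        exact mul_left_cancel₀ ht this
    have hD : ∀ x : EuclideanSpace ℝ (Fin N), HasFDerivAt
        (fun x : EuclideanSpace ℝ (Fin N) => g ‖x‖) (g₂ ‖x‖ • innerSL ℝ x) x := by
      intro x
      rcases eq_or_ne x 0 with rfl | hx
      · simp only [map_zero, smul_zero]
        rw [hasFDerivAt_iff_isLittleO_nhds_zero]
        have hgd : HasDerivAt g 0 0 := by
          have := ((hg.differentiable (by simp)) 0).hasDerivAt
          rwa [h0] at this
        have h1 := hasDerivAt_iff_isLittleO_nhds_zero.mp hgd
        have h2 : Filter.Tendsto (fun h : EuclideanSpace ℝ (Fin N) => ‖h‖) (nhds 0) (nhds 0) := by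
          simpa using (continuous_norm (E := EuclideanSpace ℝ (Fin N))).tendsto 0
        have h3 := (h1.comp_tendsto h2).trans_isBigO
          (Asymptotics.isBigO_norm_left.mpr (Asymptotics.isBigO_refl (fun h : EuclideanSpace ℝ (Fin N) => h) _))
        refine h3.congr_left ?_
        intro y
        simp
      · have hn : HasFDerivAt (fun y : EuclideanSpace ℝ (Fin N) => ‖y‖)
            ((1 / (2 * Real.sqrt (‖x‖ ^ 2))) • (2 • innerSL ℝ x)) x := by
          have h := (hasStrictFDerivAt_norm_sq x).hasFDerivAt.sqrt
            (pow_ne_zero 2 (norm_ne_zero_iff.mpr hx))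
          have hfun : (fun y : EuclideanSpace ℝ (Fin N) => Real.sqrt (‖y‖ ^ 2)) = fun y => ‖y‖ :=
            funext fun y => Real.sqrt_sq (norm_nonneg y)
          rw [hfun] at h
          exact h
        have := ((hg.differentiable (by simp)) ‖x‖).hasDerivAt.comp_hasFDerivAt x hn
        refine this.congr_fderiv ?_
        refine ContinuousLinearMap.ext fun v => ?_
        rw [hg₂e]
        have hxn : ‖x‖ ≠ 0 := norm_ne_zero_iff.mpr hx
        simp [Real.sqrt_sq (norm_nonneg x)]
        field_simp
    rw [Nat.cast_succ, contDiff_succ_iff_hasFDerivAt]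
    refine ⟨fun x => g₂ ‖x‖ • innerSL ℝ x, ?_, hD⟩
    exact (ih g₂ hg₂ he₂).smul (innerSL ℝ (E := EuclideanSpace ℝ (Fin N))).contDiff

/-- An even analytic function composed with the norm is analytic. -/
lemma contDiff_comp_norm {N : ℕ} {g : ℝ → ℝ} (hg : ContDiff ℝ (⊤ : ℕ∞) g)
    (he : ∀ t, g (-t) = g t) :
    ContDiff ℝ (⊤ : ℕ∞) (fun x : EuclideanSpace ℝ (Fin N) => g ‖x‖) := by
  rw [contDiff_infty]
  intro k
  exact aux_norm_k N k g hg he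

end Aux

/-- Restriction to the first coordinate axis, `f ↦ (t ↦ f(t,0,…,0))`, is a
bijection from smooth `O(n)`-invariant functions on `ℝⁿ` to smooth even
functions on `ℝ`. -/
theorem orthogonal_invariant_bij_even {n : ℕ} (hn : 0 < n) :
    Set.BijOn
      (fun (f : EuclideanSpace ℝ (Fin n) → ℝ) =>
        fun t : ℝ => f (EuclideanSpace.single (⟨0, hn⟩ : Fin n) t))
      {f | ContDiff ℝ (⊤ : ℕ∞) f ∧
        ∀ (A : EuclideanSpace ℝ (Fin n) ≃ₗᵢ[ℝ] EuclideanSpace ℝ (Fin n))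
          (x : EuclideanSpace ℝ (Fin n)), f (A x) = f x}
      {g : ℝ → ℝ | ContDiff ℝ (⊤ : ℕ∞) g ∧ ∀ t, g (-t) = g t} := by
  set i : Fin n := ⟨0, hn⟩
  have hsingle_lin : (fun t : ℝ => EuclideanSpace.single i t)
      = fun t : ℝ => t • EuclideanSpace.single i (1 : ℝ) := by
    funext t
    ext j
    by_cases hj : j = i <;>
      simp [EuclideanSpace.single_apply, hj]
  have hsingle_neg : ∀ t : ℝ, EuclideanSpace.single i (-t) = -EuclideanSpace.single i t := by
    intro t
    ext j
    by_cases hj : j = i <;> simp [EuclideanSpace.single_apply, hj]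
  have hsingle_norm : ∀ t : ℝ, ‖EuclideanSpace.single i t‖ = |t| := by
    intro t
    rw [EuclideanSpace.norm_single, Real.norm_eq_abs]
  constructor
  · -- MapsTo
    rintro f ⟨hf, hinv⟩
    constructor
    · -- smooth
      have : ContDiff ℝ (⊤ : ℕ∞) (fun t : ℝ => EuclideanSpace.single i t) := by
        rw [hsingle_lin]
        exact contDiff_id.smul contDiff_const
      exact hf.comp this
    · -- even
      intro t
      have := hinv (LinearIsometryEquiv.neg ℝ) (EuclideanSpace.single i t)
      simpa [hsingle_neg t] using this
  constructor
  · -- InjOn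
    rintro f₁ ⟨hf₁, hinv₁⟩ f₂ ⟨hf₂, hinv₂⟩ heq
    funext x
    rcases eq_or_ne x 0 with rfl | hx
    · have h0 : EuclideanSpace.single i (0 : ℝ) = (0 : EuclideanSpace ℝ (Fin n)) := by
        ext j; simp [EuclideanSpace.single_apply]
      have := congrFun heq 0
      simpa [h0] using this
    · set v : EuclideanSpace ℝ (Fin n) := EuclideanSpace.single i ‖x‖ with hv
      have hnorm : ‖v‖ = ‖x‖ := by
        rw [hv, hsingle_norm, abs_of_nonneg (norm_nonneg x)]
      set A := Submodule.reflection (ℝ ∙ (v - x))ᗮ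
      have hA : A v = x := Submodule.reflection_sub hnorm
      have h1 : f₁ x = f₁ v := by rw [← hA]; exact hinv₁ A v
      have h2 : f₂ x = f₂ v := by rw [← hA]; exact hinv₂ A v
      rw [h1, h2, hv]
      exact congrFun heq ‖x‖
  · -- SurjOn
    rintro g ⟨hg, hge⟩
    refine ⟨fun x => g ‖x‖, ⟨contDiff_comp_norm hg hge, fun A x => by simp only [LinearIsometryEquiv.norm_map]⟩, ?_⟩
    funext t
    simp only
    rw [hsingle_norm]
    rcases le_or_gt 0 t with ht | ht
    · rw [abs_of_nonneg ht]
    · rw [abs_of_neg ht, hge]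
end

section
/- Let f : ℝ → ℝ² be a smooth map with image contained in Y = {(x,y) : xy = 0}, write f = (f₁, f₂), and suppose f(0) = (0,0) and f does not locally factor through either axis near 0 (i.e., in every neighborhood of 0 both f₁ and f₂ take nonzero values). Then f₁(0) = f₂(0) = 0 = f₁'(0) = f₂'(0). -/
open Filter Topology

private lemma aux_deriv_zero (g h : ℝ → ℝ) (hg : Differentiable ℝ g)
    (hgh : ∀ t, g t * h t = 0) (hg0 : g 0 = 0) (hh0 : h 0 = 0)
    (hn : ∀ ε > (0 : ℝ), ∃ t : ℝ, |t| < ε ∧ h t ≠ 0) :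
    deriv g 0 = 0 := by
  -- choose a sequence tending to 0 where h ≠ 0
  have hchoice : ∀ n : ℕ, ∃ t : ℝ, |t| < 1 / (n + 1) ∧ h t ≠ 0 := by
    intro n
    exact hn (1 / (n + 1)) (by positivity)
  choose u hu hhu using hchoice
  have hune : ∀ n, u n ≠ 0 := by
    intro n hn0
    exact hhu n (by rw [hn0, hh0])
  have hgu : ∀ n, g (u n) = 0 := by
    intro n
    rcases mul_eq_zero.mp (hgh (u n)) with h1 | h2
    · exact h1
    · exact absurd h2 (hhu n)
  have hu0 : Tendsto u atTop (𝓝 0) := by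
    apply squeeze_zero_norm (fun n => (hu n).le)
    exact tendsto_one_div_add_atTop_nhds_zero_nat
  have hu0' : Tendsto u atTop (𝓝[≠] 0) := by
    apply tendsto_nhdsWithin_of_tendsto_nhds_of_eventually_within _ hu0
    exact Eventually.of_forall fun n => hune n
  have hd : HasDerivAt g (deriv g 0) 0 := (hg 0).hasDerivAt
  rw [hasDerivAt_iff_tendsto_slope] at hd
  have hcomp : Tendsto (fun n => slope g 0 (u n)) atTop (𝓝 (deriv g 0)) :=
    hd.comp hu0'
  have hzero : (fun n => slope g 0 (u n)) = fun _ => (0 : ℝ) := by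
    funext n
    simp [slope, hg0, hgu n]
  rw [hzero] at hcomp
  exact tendsto_nhds_unique hcomp tendsto_const_nhds

/-- Let `f : ℝ → ℝ²` be smooth with image in the union of the axes
`Y = {(x,y) | xy = 0}`, with `f 0 = (0,0)`, and suppose that in every
neighborhood of `0` both coordinates of `f` take nonzero values.  Then
`f₁ 0 = f₂ 0 = 0 = f₁' 0 = f₂' 0`. -/
theorem cross_plot_derivative_zero (f : ℝ → ℝ × ℝ) (hf : ContDiff ℝ (⊤ : ℕ∞) f)
    (him : ∀ t, (f t).1 * (f t).2 = 0) (h0 : f 0 = (0, 0))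
    (hnf : ∀ ε > (0 : ℝ),
      (∃ t : ℝ, |t| < ε ∧ (f t).1 ≠ 0) ∧ (∃ t : ℝ, |t| < ε ∧ (f t).2 ≠ 0)) :
    (f 0).1 = 0 ∧ (f 0).2 = 0 ∧
      deriv (fun t => (f t).1) 0 = 0 ∧ deriv (fun t => (f t).2) 0 = 0 := by
  have hdf : Differentiable ℝ f := hf.differentiable (by simp)
  have hf1 : (f 0).1 = 0 := by rw [h0]
  have hf2 : (f 0).2 = 0 := by rw [h0]
  refine ⟨hf1, hf2, ?_, ?_⟩
  · exact aux_deriv_zero (fun t => (f t).1) (fun t => (f t).2) hdf.fst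
      him hf1 hf2 (fun ε hε => (hnf ε hε).2)
  · exact aux_deriv_zero (fun t => (f t).2) (fun t => (f t).1) hdf.snd
      (fun t => by rw [mul_comm]; exact him t) hf2 hf1 (fun ε hε => (hnf ε hε).1)
end
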